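/- arXiv:1903.03824 — 2 statements merged into one kernel-verified Lean document; each statement's English description precedes it below -/
import Mathlib

section
/- Let R ∈ (0,∞] and let φ : [0,R) → ℝ be strictly increasing and convex with lim_{s→R} φ(s) = ∞. Let φ^{-1} : [φ(0), ∞) → [0,R) denote the inverse of φ. Then for every r ∈ (0,1] and all s, s̃ ∈ [0,R): |φ^{-1}(φ(s) − log r) − φ^{-1}(φ(s̃) − log r)| ≤ |s − s̃|. -/
open Set Filter

noncomputable section

/-- The domain `[0, R)` of `φ`, where `R ∈ (0, ∞]` is encoded as an extended nonnegative real. -/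
def phiDom (R : ENNReal) : Set ℝ := {s | 0 ≤ s ∧ ENNReal.ofReal s < R}

lemma phiDom_ordconn {R : ENNReal} (hconv : Convex ℝ (phiDom R))
    {u t x : ℝ} (hu : u ∈ phiDom R) (ht : t ∈ phiDom R) (h1 : u ≤ x) (h2 : x ≤ t) :
    x ∈ phiDom R := hconv.ordConnected.out hu ht ⟨h1, h2⟩

lemma phiDom_open_subset {R : ENNReal} :
    {x : ℝ | 0 < x ∧ ENNReal.ofReal x < R} ⊆ interior (phiDom R) := by
  apply subset_interior_iff.2
  refine ⟨{x : ℝ | 0 < x ∧ ENNReal.ofReal x < R}, ?_, subset_rfl, ?_⟩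
  · exact (isOpen_lt continuous_const continuous_id).inter
      (isOpen_Iio.preimage ENNReal.continuous_ofReal)
  · exact fun x hx => ⟨hx.1.le, hx.2⟩

lemma exists_big (R : ENNReal) (hR : 0 < R) (φ : ℝ → ℝ)
    (hlim : Tendsto φ (comap ENNReal.ofReal (nhdsWithin R (Iio R))) atTop)
    (y : ℝ) : ∃ t ∈ phiDom R, y < φ t := by
  have h1 : ∀ᶠ x in comap ENNReal.ofReal (nhdsWithin R (Iio R)), y < φ x :=
    hlim.eventually (eventually_gt_atTop y)
  rw [Filter.eventually_comap] at h1
  have hne : (Iio R).Nonempty := ⟨0, hR⟩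
  have : NeBot (nhdsWithin R (Iio R)) := nhdsWithin_Iio_self_neBot' hne
  have h2 : ∀ᶠ a in nhdsWithin R (Iio R), a ∈ Iio R := self_mem_nhdsWithin
  obtain ⟨a, haR, ha⟩ := (h2.and h1).exists
  have hat : a ≠ ⊤ := (lt_of_lt_of_le haR le_top).ne
  refine ⟨a.toReal, ⟨ENNReal.toReal_nonneg, ?_⟩, ha a.toReal (ENNReal.ofReal_toReal hat)⟩
  rw [ENNReal.ofReal_toReal hat]; exact haR

lemma exists_preimage (R : ENNReal) (hR : 0 < R) (φ : ℝ → ℝ)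
    (hmono : StrictMonoOn φ (phiDom R)) (hconv : ConvexOn ℝ (phiDom R) φ)
    (hlim : Tendsto φ (comap ENNReal.ofReal (nhdsWithin R (Iio R))) atTop)
    {u : ℝ} (hu : u ∈ phiDom R) {c : ℝ} (hc : 0 ≤ c) :
    ∃ b ∈ phiDom R, φ b = φ u + c := by
  rcases eq_or_lt_of_le hc with rfl | hc
  · exact ⟨u, hu, by ring⟩
  set y := φ u + c with hy
  obtain ⟨t, ht, hty⟩ := exists_big R hR φ hlim y
  have hut : u < t := by
    by_contra h
    push_neg at h
    rcases eq_or_lt_of_le h with rfl | h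
    · exact absurd hty (by simp [hy]; linarith)
    · have := hmono ht hu h
      simp only [hy] at hty; linarith
  -- find s₀ > 0 with φ s₀ ≤ y and s₀ ≤ t, s₀ in domain
  have hICont : ∀ s₀, 0 < s₀ → s₀ ∈ phiDom R → s₀ ≤ t → φ s₀ ≤ y →
      ∃ b ∈ phiDom R, φ b = y := by
    intro s₀ hs0 hs0m hs0t hphis0
    have hsub : Icc s₀ t ⊆ interior (phiDom R) := by
      intro x hx
      apply phiDom_open_subset
      exact ⟨lt_of_lt_of_le hs0 hx.1,
        (phiDom_ordconn hconv.1 hs0m ht hx.1 hx.2).2⟩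
    have hcont : ContinuousOn φ (Icc s₀ t) :=
      (hconv.continuousOn_interior).mono hsub
    have : y ∈ φ '' Icc s₀ t := by
      apply intermediate_value_Icc hs0t hcont
      exact ⟨hphis0, hty.le⟩
    obtain ⟨b, hb, hbeq⟩ := this
    exact ⟨b, phiDom_ordconn hconv.1 hs0m ht hb.1 hb.2, hbeq⟩
  rcases lt_or_eq_of_le hu.1 with hu0 | hu0
  · exact hICont u hu0 hu (le_of_lt hut) (by simp [hy]; linarith)
  · -- u = 0
    have hu0' : u = 0 := hu0.symm
    have ht0 : 0 < t := by rw [hu0'] at hut; exact hut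
    have hd : 0 < φ t - φ u := sub_pos.2 (hmono hu ht hut)
    set l := min (c / (φ t - φ u)) (1/2) with hl
    have hl0 : 0 < l := lt_min (div_pos hc hd) (by norm_num)
    have hl1 : l ≤ 1/2 := min_le_right _ _
    set s₀ := l * t with hs0def
    have hs0pos : 0 < s₀ := mul_pos hl0 ht0
    have hs0t : s₀ ≤ t := by
      rw [hs0def]
      nlinarith
    have hs0mem : s₀ ∈ phiDom R := phiDom_ordconn hconv.1 hu ht (by rw [hu0']; exact hs0pos.le) hs0t
    have hφs0 : φ s₀ ≤ y := by
      have hcv := hconv.2 hu ht (show (0:ℝ) ≤ 1 - l by linarith) hl0.le (by ring)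
      rw [hu0'] at hcv
      simp only [smul_eq_mul, mul_zero, zero_add] at hcv
      have hls : l * (φ t - φ u) ≤ c := by
        have : l ≤ c / (φ t - φ u) := min_le_left _ _
        calc l * (φ t - φ u) ≤ (c / (φ t - φ u)) * (φ t - φ u) := by nlinarith
          _ = c := by field_simp
      rw [hu0'] at hls
      calc φ s₀ = φ (l * t) := by rw [hs0def]
        _ ≤ φ 0 + c := by nlinarith [hcv, hls]
        _ = y := by rw [hy, hu0']
    exact hICont s₀ hs0pos hs0mem hs0t hφs0

theorem statement3 (R : ENNReal) (hR : 0 < R) (φ : ℝ → ℝ)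
    (hmono : StrictMonoOn φ (phiDom R)) (hconv : ConvexOn ℝ (phiDom R) φ)
    (hlim : Tendsto φ (comap ENNReal.ofReal (nhdsWithin R (Iio R))) atTop)
    (r : ℝ) (hr : r ∈ Ioc (0 : ℝ) 1) (s s' : ℝ)
    (hs : s ∈ phiDom R) (hs' : s' ∈ phiDom R) :
    |Function.invFunOn φ (phiDom R) (φ s - Real.log r) -
        Function.invFunOn φ (phiDom R) (φ s' - Real.log r)| ≤ |s - s'| := by
  have hc : 0 ≤ -Real.log r := by
    have := Real.log_nonpos hr.1.le hr.2
    linarith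
  wlog hss : s ≤ s' with H
  · rw [abs_sub_comm, abs_sub_comm s s']
    exact H R hR φ hmono hconv hlim r hr s' s hs' hs hc (le_of_not_ge hss)
  rcases eq_or_lt_of_le hss with rfl | hss
  · simp
  -- existence of preimages
  have hexa : ∃ a ∈ phiDom R, φ a = φ s - Real.log r := by
    obtain ⟨a, ha, he⟩ := exists_preimage R hR φ hmono hconv hlim hs hc
    exact ⟨a, ha, by rw [he]; ring⟩
  have hexb : ∃ b ∈ phiDom R, φ b = φ s' - Real.log r := by
    obtain ⟨b, hb, he⟩ := exists_preimage R hR φ hmono hconv hlim hs' hc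
    exact ⟨b, hb, by rw [he]; ring⟩
  set a := Function.invFunOn φ (phiDom R) (φ s - Real.log r) with hadef
  set b := Function.invFunOn φ (phiDom R) (φ s' - Real.log r) with hbdef
  have ha : a ∈ phiDom R := Function.invFunOn_mem hexa
  have hfa : φ a = φ s - Real.log r := Function.invFunOn_eq hexa
  have hb : b ∈ phiDom R := Function.invFunOn_mem hexb
  have hfb : φ b = φ s' - Real.log r := Function.invFunOn_eq hexb
  have hphiss' : φ s < φ s' := hmono hs hs' hss
  have hsa : s ≤ a := by
    rw [← hmono.le_iff_le hs ha, hfa]; linarith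
  have hab : a ≤ b := by
    rw [← hmono.le_iff_le ha hb, hfa, hfb]; linarith
  have hkey : b ≤ a + (s' - s) := by
    by_contra h
    push_neg at h
    set t := a + (s' - s) with htdef
    have hat : a < t := by rw [htdef]; linarith
    have ht : t ∈ phiDom R := phiDom_ordconn hconv.1 ha hb hat.le h.le
    have hst : s < t := lt_of_le_of_lt hsa hat
    -- slope chain : slope s s' ≤ slope s t ≤ slope a t
    have h1 : (φ s' - φ s) / (s' - s) ≤ (φ t - φ s) / (t - s) :=
      hconv.secant_mono hs hs' ht hss.ne' hst.ne' (by linarith)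
    have h2 : (φ s - φ t) / (s - t) ≤ (φ a - φ t) / (a - t) :=
      hconv.secant_mono ht hs ha hst.ne hat.ne hsa
    have h2' : (φ t - φ s) / (t - s) ≤ (φ t - φ a) / (t - a) := by
      have e1 : (φ s - φ t) / (s - t) = (φ t - φ s) / (t - s) := by
        rw [← neg_div_neg_eq]; ring_nf
      have e2 : (φ a - φ t) / (a - t) = (φ t - φ a) / (t - a) := by
        rw [← neg_div_neg_eq]; ring_nf
      rw [e1, e2] at h2; exact h2
    have h3 : (φ s' - φ s) / (s' - s) ≤ (φ t - φ a) / (t - a) := le_trans h1 h2'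
    have hta : t - a = s' - s := by rw [htdef]; ring
    have hpos : 0 < s' - s := by linarith
    rw [hta, div_le_div_iff_of_pos_right hpos] at h3
    have hphit : φ b ≤ φ t := by rw [hfb]; linarith [hfa]
    have : b ≤ t := by rw [hmono.le_iff_le hb ht] at hphit; exact hphit
    linarith
  rw [abs_sub_comm, abs_of_nonneg (by linarith), abs_of_nonpos (by linarith)]
  linarith
end
end

section
/- Let ℓ : (0,∞) → [0,∞) be continuously differentiable on its open support supp ℓ with ℓ'(t) < 0 there, and for k ∈ ℕ define ψ : supp ℓ → ℝ by ψ(t) = t ℓ'(t) / ℓ(t)^{1−1/k}. Then ℓ belongs to Λ_k if and only if ψ is decreasing on supp ℓ. -/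
open ENNReal

noncomputable section

/-- `sup{t > 0 : ℓ(t) > 0}`, computed in `ℝ≥0∞` so that an unbounded support is allowed. -/
def suppSup (ℓ : ℝ → ℝ) : ℝ≥0∞ := ⨆ t ∈ {t : ℝ | 0 < t ∧ 0 < ℓ t}, ENNReal.ofReal t

/-- The open support `supp ℓ = (0, sup{t > 0 : ℓ(t) > 0})` of `ℓ`. -/
def openSupp (ℓ : ℝ → ℝ) : Set ℝ := {t : ℝ | 0 < t ∧ ENNReal.ofReal t < suppSup ℓ}

/-- `‖ℓ‖_∞ = sup_{t > 0} ℓ(t) = lim_{t → 0+} ℓ(t)`, computed in `ℝ≥0∞`. -/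
def supNorm (ℓ : ℝ → ℝ) : ℝ≥0∞ := ⨆ t ∈ Set.Ioi (0 : ℝ), ENNReal.ofReal (ℓ t)

/-- The inverse `ℓ⁻¹` of `ℓ`, defined via its restriction to the open support. -/
def linv (ℓ : ℝ → ℝ) : ℝ → ℝ := Function.invFunOn ℓ (openSupp ℓ)

/-- Membership of `ℓ : (0,∞) → [0,∞)` in the class `Λ_k` (for `k ∈ ℕ = {1, 2, ...}`):
`ℓ` is continuous and nonnegative on `(0,∞)`, strictly decreasing on its open support
`(0, sup{t : ℓ(t) > 0})`, and `g(s) = ℓ⁻¹(s^k)` is log-concave on `(0, ‖ℓ‖_∞^{1/k})`. -/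
def MemLambda (k : ℕ) (ℓ : ℝ → ℝ) : Prop :=
  1 ≤ k ∧ ContinuousOn ℓ (Set.Ioi 0) ∧ (∀ t ∈ Set.Ioi (0 : ℝ), 0 ≤ ℓ t) ∧
    StrictAntiOn ℓ (openSupp ℓ) ∧
    ConcaveOn ℝ {s : ℝ | 0 < s ∧ ENNReal.ofReal (s ^ k) < supNorm ℓ}
      (fun s => Real.log (linv ℓ (s ^ k)))

open Set Filter Topology

section Aux

variable {k : ℕ} {ℓ ℓ' : ℝ → ℝ} {t u x : ℝ}

lemma mem_openSupp_of_pos (hcont : ContinuousOn ℓ (Set.Ioi 0))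
    (ht : 0 < t) (hl : 0 < ℓ t) : t ∈ openSupp ℓ := by
  have hca : ContinuousAt ℓ t := hcont.continuousAt (Ioi_mem_nhds ht)
  have h1 : ℓ ⁻¹' (Set.Ioi 0) ∈ 𝓝 t := hca (Ioi_mem_nhds hl)
  have h2 : ℓ ⁻¹' (Set.Ioi 0) ∈ 𝓝[>] t := nhdsWithin_le_nhds h1
  obtain ⟨t', hlt', ht'⟩ := (Filter.Eventually.and (Filter.eventually_mem_set.mpr h2) (Filter.eventually_mem_set.mpr self_mem_nhdsWithin)).exists
  refine ⟨ht, lt_of_lt_of_le ((ENNReal.ofReal_lt_ofReal_iff_of_nonneg ht.le).2 ht') ?_⟩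
  exact le_biSup (fun t => ENNReal.ofReal t) ⟨ht.trans ht', hlt'⟩

lemma eq_zero_of_not_mem_openSupp (hcont : ContinuousOn ℓ (Set.Ioi 0))
    (hnonneg : ∀ t ∈ Set.Ioi (0:ℝ), 0 ≤ ℓ t)
    (ht : 0 < t) (h : t ∉ openSupp ℓ) : ℓ t = 0 := by
  rcases (hnonneg t ht).eq_or_lt with h0 | h0
  · exact h0.symm
  · exact absurd (mem_openSupp_of_pos hcont ht h0) h

lemma openSupp_isOpen : IsOpen (openSupp ℓ) := by
  have : openSupp ℓ = Set.Ioi 0 ∩ (fun t : ℝ => ENNReal.ofReal t) ⁻¹' (Set.Iio (suppSup ℓ)) := rfl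
  rw [this]
  exact isOpen_Ioi.inter (isOpen_Iio.preimage ENNReal.continuous_ofReal)

lemma openSupp_down (ht : t ∈ openSupp ℓ) (hu : 0 < u) (hut : u ≤ t) : u ∈ openSupp ℓ :=
  ⟨hu, lt_of_le_of_lt (ENNReal.ofReal_le_ofReal hut) ht.2⟩

lemma openSupp_convex : Convex ℝ (openSupp ℓ) := by
  rw [convex_iff_ordConnected]
  constructor
  intro a ha b hb z hz
  exact openSupp_down hb (lt_of_lt_of_le ha.1 hz.1) hz.2

end Aux
section Aux2

variable {k : ℕ} {ℓ ℓ' : ℝ → ℝ} {t u t₁ t₂ x : ℝ}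

lemma strictAntiOn_openSupp (hcont : ContinuousOn ℓ (Set.Ioi 0))
    (hderiv : ∀ t ∈ openSupp ℓ, HasDerivAt ℓ (ℓ' t) t)
    (hneg : ∀ t ∈ openSupp ℓ, ℓ' t < 0) : StrictAntiOn ℓ (openSupp ℓ) := by
  refine strictAntiOn_of_deriv_neg openSupp_convex
    (hcont.mono (fun t ht => ht.1)) (fun x hx => ?_)
  have hx' : x ∈ openSupp ℓ := interior_subset hx
  rw [(hderiv x hx').deriv]
  exact hneg x hx'

lemma pos_of_mem_openSupp (hcont : ContinuousOn ℓ (Set.Ioi 0))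
    (hnonneg : ∀ t ∈ Set.Ioi (0:ℝ), 0 ≤ ℓ t)
    (hderiv : ∀ t ∈ openSupp ℓ, HasDerivAt ℓ (ℓ' t) t)
    (hneg : ∀ t ∈ openSupp ℓ, ℓ' t < 0) (ht : t ∈ openSupp ℓ) : 0 < ℓ t := by
  have hS := strictAntiOn_openSupp hcont hderiv hneg
  -- find t' ∈ openSupp with t < t'
  have h2 : ENNReal.ofReal t < suppSup ℓ := ht.2
  rw [suppSup, lt_iSup_iff] at h2
  obtain ⟨t', h2⟩ := h2
  rw [lt_iSup_iff] at h2
  obtain ⟨⟨ht'0, hlt'⟩, hlt⟩ := h2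
  have htt' : t < t' := by
    by_contra h
    exact absurd (ENNReal.ofReal_le_ofReal (not_lt.1 h)) (not_le.2 hlt)
  set m := (t + t') / 2 with hm
  have hm1 : t < m := by simp [hm]; linarith
  have hm2 : m < t' := by simp [hm]; linarith
  have hmD : m ∈ openSupp ℓ :=
    ⟨ht.1.trans hm1, lt_of_lt_of_le
      ((ENNReal.ofReal_lt_ofReal_iff_of_nonneg (ht.1.trans hm1).le).2 hm2)
      (le_biSup (fun t => ENNReal.ofReal t) ⟨ht'0, hlt'⟩)⟩
  calc (0:ℝ) ≤ ℓ m := hnonneg m (Set.mem_Ioi.2 (ht.1.trans hm1))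
  _ < ℓ t := hS ht hmD hm1

lemma lt_supNorm_of_mem (hcont : ContinuousOn ℓ (Set.Ioi 0))
    (hnonneg : ∀ t ∈ Set.Ioi (0:ℝ), 0 ≤ ℓ t)
    (hderiv : ∀ t ∈ openSupp ℓ, HasDerivAt ℓ (ℓ' t) t)
    (hneg : ∀ t ∈ openSupp ℓ, ℓ' t < 0) (ht : t ∈ openSupp ℓ) :
    ENNReal.ofReal (ℓ t) < supNorm ℓ := by
  have hS := strictAntiOn_openSupp hcont hderiv hneg
  have h2 : t / 2 ∈ openSupp ℓ := openSupp_down ht (by linarith [ht.1]) (by linarith [ht.1])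
  have hlt : ℓ t < ℓ (t / 2) := hS h2 ht (by linarith [ht.1])
  refine lt_of_lt_of_le ((ENNReal.ofReal_lt_ofReal_iff_of_nonneg
    (hnonneg t (Set.mem_Ioi.2 ht.1))).2 hlt) ?_
  exact le_biSup (fun t => ENNReal.ofReal (ℓ t)) (Set.mem_Ioi.2 h2.1)

lemma linv_apply (hcont : ContinuousOn ℓ (Set.Ioi 0))
    (hderiv : ∀ t ∈ openSupp ℓ, HasDerivAt ℓ (ℓ' t) t)
    (hneg : ∀ t ∈ openSupp ℓ, ℓ' t < 0) (hu : u ∈ openSupp ℓ) :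
    linv ℓ (ℓ u) = u :=
  (strictAntiOn_openSupp hcont hderiv hneg).injOn.leftInvOn_invFunOn hu

lemma image_mem_nhds (hcont : ContinuousOn ℓ (Set.Ioi 0))
    (hderiv : ∀ t ∈ openSupp ℓ, HasDerivAt ℓ (ℓ' t) t)
    (hneg : ∀ t ∈ openSupp ℓ, ℓ' t < 0) (hu : u ∈ openSupp ℓ) :
    ℓ '' openSupp ℓ ∈ 𝓝 (ℓ u) := by
  have hS := strictAntiOn_openSupp hcont hderiv hneg
  obtain ⟨ε, hε, hball⟩ := Metric.isOpen_iff.1 (openSupp_isOpen (ℓ := ℓ)) u hu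
  have hIcc : Set.Icc (u - ε/2) (u + ε/2) ⊆ openSupp ℓ := by
    intro z hz
    apply hball
    rw [Metric.mem_ball, Real.dist_eq, abs_lt]
    constructor <;> [linarith [hz.1]; linarith [hz.2]]
  have hmem1 : u - ε/2 ∈ openSupp ℓ := hIcc ⟨le_refl _, by linarith⟩
  have hmem2 : u + ε/2 ∈ openSupp ℓ := hIcc ⟨by linarith, le_refl _⟩
  have hsub : Set.Icc (ℓ (u + ε/2)) (ℓ (u - ε/2)) ⊆ ℓ '' Set.Icc (u - ε/2) (u + ε/2) :=
    intermediate_value_Icc' (by linarith) ((hcont.mono (fun t ht => ht.1)).mono hIcc)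
  refine Filter.mem_of_superset (Ioo_mem_nhds (a := ℓ (u + ε/2)) (b := ℓ (u - ε/2))
    (hS hu hmem2 (by linarith)) (hS hmem1 hu (by linarith))) ?_
  exact fun z hz => (Set.image_mono hIcc) (hsub ⟨hz.1.le, hz.2.le⟩)

end Aux2
section Aux3

variable {k : ℕ} {ℓ ℓ' : ℝ → ℝ} {t u s x : ℝ}

lemma continuousAt_linv (hcont : ContinuousOn ℓ (Set.Ioi 0))
    (hderiv : ∀ t ∈ openSupp ℓ, HasDerivAt ℓ (ℓ' t) t)
    (hneg : ∀ t ∈ openSupp ℓ, ℓ' t < 0) (hu : u ∈ openSupp ℓ) :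
    ContinuousAt (linv ℓ) (ℓ u) := by
  have hS := strictAntiOn_openSupp hcont hderiv hneg
  set h₂ : ℝ → ℝ := fun x => -(linv ℓ x) with hh₂
  have hmono : StrictMonoOn h₂ (ℓ '' openSupp ℓ) := by
    rintro x ⟨a, ha, rfl⟩ y ⟨b, hb, rfl⟩ hxy
    have hba : b < a := by
      rcases lt_trichotomy a b with h | h | h
      · exact absurd (hS ha hb h) (not_lt.2 hxy.le)
      · exact absurd hxy (by rw [h]; exact lt_irrefl _)
      · exact h
    simp only [hh₂, linv_apply hcont hderiv hneg ha, linv_apply hcont hderiv hneg hb]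
    exact neg_lt_neg hba
  have himg : (fun z : ℝ => -z) '' openSupp ℓ = (fun z : ℝ => -z) ⁻¹' openSupp ℓ := by
    ext z
    simp only [Set.mem_image, Set.mem_preimage]
    constructor
    · rintro ⟨w, hw, rfl⟩; simpa using hw
    · intro hz; exact ⟨-z, hz, by ring⟩
  have hopen : IsOpen ((fun z : ℝ => -z) '' openSupp ℓ) := by
    rw [himg]; exact openSupp_isOpen.preimage continuous_neg
  have hc₂ : ContinuousAt h₂ (ℓ u) := by
    refine hmono.continuousAt_of_image_mem_nhds
      (image_mem_nhds hcont hderiv hneg hu) ?_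
    have hval : h₂ (ℓ u) = -u := by
      simp only [hh₂, linv_apply hcont hderiv hneg hu]
    rw [hval]
    refine Filter.mem_of_superset (hopen.mem_nhds ⟨u, hu, rfl⟩) ?_
    rintro z ⟨w, hw, rfl⟩
    exact ⟨ℓ w, ⟨w, hw, rfl⟩, by simp [hh₂, linv_apply hcont hderiv hneg hw]⟩
  have := hc₂.neg
  simp only [hh₂, neg_neg] at this
  convert this using 1; funext x; simp

lemma hasDerivAt_linv (hcont : ContinuousOn ℓ (Set.Ioi 0))
    (hderiv : ∀ t ∈ openSupp ℓ, HasDerivAt ℓ (ℓ' t) t)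
    (hneg : ∀ t ∈ openSupp ℓ, ℓ' t < 0) (hu : u ∈ openSupp ℓ) :
    HasDerivAt (linv ℓ) (ℓ' u)⁻¹ (ℓ u) := by
  refine HasDerivAt.of_local_left_inverse (f := ℓ) (continuousAt_linv hcont hderiv hneg hu)
    ?_ (hneg u hu).ne ?_
  · rw [linv_apply hcont hderiv hneg hu]; exact hderiv u hu
  · refine Filter.eventually_of_mem (image_mem_nhds hcont hderiv hneg hu) ?_
    rintro y ⟨a, ha, rfl⟩
    exact Function.invFunOn_eq ⟨a, ha, rfl⟩

lemma psi_neg (hcont : ContinuousOn ℓ (Set.Ioi 0))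
    (hnonneg : ∀ t ∈ Set.Ioi (0:ℝ), 0 ≤ ℓ t)
    (hderiv : ∀ t ∈ openSupp ℓ, HasDerivAt ℓ (ℓ' t) t)
    (hneg : ∀ t ∈ openSupp ℓ, ℓ' t < 0) (ht : t ∈ openSupp ℓ) :
    t * ℓ' t / ℓ t ^ ((1:ℝ) - 1/(k:ℝ)) < 0 := by
  have h1 : 0 < ℓ t := pos_of_mem_openSupp hcont hnonneg hderiv hneg ht
  exact div_neg_of_neg_of_pos (mul_neg_of_pos_of_neg ht.1 (hneg t ht))
    (Real.rpow_pos_of_pos h1 _)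

lemma hasDerivAt_logF (hk : 1 ≤ k) (hcont : ContinuousOn ℓ (Set.Ioi 0))
    (hnonneg : ∀ t ∈ Set.Ioi (0:ℝ), 0 ≤ ℓ t)
    (hderiv : ∀ t ∈ openSupp ℓ, HasDerivAt ℓ (ℓ' t) t)
    (hneg : ∀ t ∈ openSupp ℓ, ℓ' t < 0)
    (hs : 0 < s) (hu : u ∈ openSupp ℓ) (hlu : ℓ u = s ^ k) :
    HasDerivAt (fun y => Real.log (linv ℓ (y ^ k)))
      ((k : ℝ) / (u * ℓ' u / ℓ u ^ ((1:ℝ) - 1/(k:ℝ)))) s := by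
  have hupos : 0 < u := hu.1
  have hlpos : 0 < ℓ u := pos_of_mem_openSupp hcont hnonneg hderiv hneg hu
  have h1 : HasDerivAt (linv ℓ) (ℓ' u)⁻¹ (s ^ k) :=
    hlu ▸ hasDerivAt_linv hcont hderiv hneg hu
  have h2 : HasDerivAt (fun y : ℝ => y ^ k) ((k : ℝ) * s ^ (k - 1)) s := hasDerivAt_pow k s
  have h3 : HasDerivAt (fun y : ℝ => linv ℓ (y ^ k)) ((ℓ' u)⁻¹ * ((k : ℝ) * s ^ (k - 1))) s :=
    h1.comp s h2
  have hval : linv ℓ (s ^ k) = u := by rw [← hlu]; exact linv_apply hcont hderiv hneg hu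
  have h4 := h3.log (by rw [hval]; exact hupos.ne')
  rw [hval] at h4
  convert h4 using 1
  have hk0 : (k : ℝ) ≠ 0 := Nat.cast_ne_zero.2 (by omega)
  have hsk : ℓ u ^ ((1:ℝ) - 1/(k:ℝ)) = s ^ (k - 1) := by
    rw [hlu, ← Real.rpow_natCast s k, ← Real.rpow_natCast s (k-1),
      ← Real.rpow_mul hs.le]
    congr 1
    push_cast [Nat.cast_sub hk]
    field_simp
  rw [hsk]
  have hP : (0:ℝ) < s ^ (k - 1) := pow_pos hs _
  field_simp

end Aux3
section Aux4

variable {k : ℕ} {ℓ ℓ' : ℝ → ℝ} {t u s x : ℝ}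

lemma T_isOpen : IsOpen {s : ℝ | 0 < s ∧ ENNReal.ofReal (s ^ k) < supNorm ℓ} := by
  have : {s : ℝ | 0 < s ∧ ENNReal.ofReal (s ^ k) < supNorm ℓ}
      = Set.Ioi 0 ∩ (fun s : ℝ => ENNReal.ofReal (s ^ k)) ⁻¹' (Set.Iio (supNorm ℓ)) := rfl
  rw [this]
  exact isOpen_Ioi.inter (isOpen_Iio.preimage
    (ENNReal.continuous_ofReal.comp (continuous_pow k)))

lemma T_convex : Convex ℝ {s : ℝ | 0 < s ∧ ENNReal.ofReal (s ^ k) < supNorm ℓ} := by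
  rw [convex_iff_ordConnected]
  constructor
  rintro a ⟨ha0, _⟩ b ⟨_, hbN⟩ z hz
  refine ⟨lt_of_lt_of_le ha0 hz.1, lt_of_le_of_lt ?_ hbN⟩
  exact ENNReal.ofReal_le_ofReal (pow_le_pow_left₀ (le_of_lt (lt_of_lt_of_le ha0 hz.1)) hz.2 k)

lemma exists_hi (hcont : ContinuousOn ℓ (Set.Ioi 0))
    (hx : 0 < x) (hxN : ENNReal.ofReal x < supNorm ℓ) :
    ∃ t ∈ openSupp ℓ, x < ℓ t := by
  rw [supNorm, lt_iSup_iff] at hxN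
  obtain ⟨t, hxN⟩ := hxN
  rw [lt_iSup_iff] at hxN
  obtain ⟨ht, hxN⟩ := hxN
  have hxl : x < ℓ t := by
    by_contra h
    exact absurd (ENNReal.ofReal_le_ofReal (not_lt.1 h)) (not_le.2 hxN)
  exact ⟨t, mem_openSupp_of_pos hcont ht (hx.trans hxl), hxl⟩

lemma mem_image_of_antitone (hk : 1 ≤ k) (hcont : ContinuousOn ℓ (Set.Ioi 0))
    (hnonneg : ∀ t ∈ Set.Ioi (0:ℝ), 0 ≤ ℓ t)
    (hderiv : ∀ t ∈ openSupp ℓ, HasDerivAt ℓ (ℓ' t) t)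
    (hneg : ∀ t ∈ openSupp ℓ, ℓ' t < 0)
    (hanti : AntitoneOn (fun t => t * ℓ' t / ℓ t ^ ((1 : ℝ) - 1 / (k : ℝ))) (openSupp ℓ))
    (hx : 0 < x) (hxN : ENNReal.ofReal x < supNorm ℓ) :
    x ∈ ℓ '' openSupp ℓ := by
  have hS := strictAntiOn_openSupp hcont hderiv hneg
  obtain ⟨t₀, ht₀, hxt₀⟩ := exists_hi hcont hx hxN
  -- it suffices to find a point of the support where ℓ < x
  suffices hlo : ∃ t ∈ openSupp ℓ, ℓ t < x by
    obtain ⟨t₁, ht₁, hxt₁⟩ := hlo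
    have h01 : t₀ < t₁ := by
      by_contra h
      rcases (not_lt.1 h).eq_or_lt with h' | h'
      · exact absurd (h' ▸ hxt₁) (not_lt.2 hxt₀.le)
      · exact absurd (hS ht₁ ht₀ h') (not_lt.2 (by linarith))
    have hIcc : Set.Icc t₀ t₁ ⊆ openSupp ℓ :=
      fun z hz => openSupp_down ht₁ (lt_of_lt_of_le ht₀.1 hz.1) hz.2
    have := intermediate_value_Icc' h01.le ((hcont.mono (fun z hz => hz.1)).mono hIcc)
    exact Set.image_mono hIcc (this ⟨hxt₁.le, hxt₀.le⟩)
  by_contra hcon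
  push_neg at hcon
  -- so ℓ ≥ x on all of the support; first, the support must be all of (0, ∞)
  have hD : ∀ t : ℝ, 0 < t → t ∈ openSupp ℓ := by
    intro t ht
    refine ⟨ht, ?_⟩
    by_contra htop
    have hsne : suppSup ℓ ≠ ⊤ := fun h => htop (h ▸ ENNReal.ofReal_lt_top)
    set M := (suppSup ℓ).toReal with hM
    have hs0 : 0 < suppSup ℓ := lt_of_le_of_lt zero_le ht₀.2
    have hMpos : 0 < M := ENNReal.toReal_pos hs0.ne' hsne
    have hMeq : ENNReal.ofReal M = suppSup ℓ := ENNReal.ofReal_toReal hsne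
    -- ℓ vanishes beyond M
    have hzero : ∀ z : ℝ, M < z → ℓ z = 0 := by
      intro z hz
      refine eq_zero_of_not_mem_openSupp hcont hnonneg (hMpos.trans hz) (fun hmem => ?_)
      exact absurd (hMeq ▸ ENNReal.ofReal_le_ofReal hz.le) (not_le.2 hmem.2)
    have hca : ContinuousAt ℓ M := hcont.continuousAt (Ioi_mem_nhds hMpos)
    -- from the right, ℓ M = 0
    have hr : Filter.Tendsto ℓ (𝓝[>] M) (𝓝 (ℓ M)) :=
      (hca.continuousWithinAt).tendsto
    have he : ∀ᶠ z in 𝓝[>] M, ℓ z = 0 :=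
      eventually_mem_nhdsWithin.mono (fun z hz => hzero z hz)
    have hM0 : ℓ M = 0 := by
      have h2 : Filter.Tendsto ℓ (𝓝[>] M) (𝓝 0) :=
        Filter.Tendsto.congr' (Filter.EventuallyEq.symm he) tendsto_const_nhds
      exact tendsto_nhds_unique hr h2
    -- from the left, ℓ M ≥ x
    have hl : Filter.Tendsto ℓ (𝓝[<] M) (𝓝 (ℓ M)) := (hca.continuousWithinAt).tendsto
    have hev : ∀ᶠ z in 𝓝[<] M, x ≤ ℓ z := by
      refine Filter.eventually_of_mem (Ioo_mem_nhdsLT_of_mem ⟨hMpos, le_refl M⟩) ?_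
      intro z hz
      exact hcon z ⟨hz.1, hMeq ▸ (ENNReal.ofReal_lt_ofReal_iff_of_nonneg hz.1.le).2 hz.2⟩
    have : x ≤ ℓ M := ge_of_tendsto hl hev
    linarith [hM0 ▸ this, hx]
  -- now run the logarithmic divergence argument
  set e : ℝ := (1 : ℝ) - 1 / (k : ℝ) with hedef
  have hk0 : (0:ℝ) < (k : ℝ) := by exact_mod_cast Nat.pos_of_ne_zero (by omega)
  have he0 : 0 ≤ e := by
    rw [hedef, sub_nonneg]
    rw [div_le_one hk0]
    exact_mod_cast hk
  set ψ : ℝ → ℝ := fun t => t * ℓ' t / ℓ t ^ e with hψdef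
  have hψ0 : ψ t₀ < 0 := psi_neg hcont hnonneg hderiv hneg ht₀
  set b : ℝ := -(ψ t₀) * x ^ e with hbdef
  have hxe : (0:ℝ) < x ^ e := Real.rpow_pos_of_pos hx _
  have hb : 0 < b := mul_pos (neg_pos.2 hψ0) hxe
  have hkey : ∀ t : ℝ, t₀ ≤ t → ℓ' t ≤ -b / t := by
    intro t htt
    have htpos : 0 < t := lt_of_lt_of_le ht₀.1 htt
    have htD : t ∈ openSupp ℓ := hD t htpos
    have hψle : ψ t ≤ ψ t₀ := hanti ht₀ htD htt
    have hlx : x ≤ ℓ t := hcon t htD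
    have hlpos : 0 < ℓ t := hx.trans_le hlx
    have hle : (0:ℝ) < ℓ t ^ e := Real.rpow_pos_of_pos hlpos _
    have h1 : ℓ' t = ψ t * ℓ t ^ e / t := by
      rw [hψdef]
      field_simp
    have h2 : ψ t * ℓ t ^ e ≤ ψ t * x ^ e := by
      have hxle : x ^ e ≤ ℓ t ^ e := Real.rpow_le_rpow hx.le hlx he0
      have hψtneg : ψ t ≤ 0 := hψle.trans hψ0.le
      exact mul_le_mul_of_nonpos_left hxle hψtneg
    have h3 : ψ t * x ^ e ≤ ψ t₀ * x ^ e := mul_le_mul_of_nonneg_right hψle hxe.le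
    have h4 : ψ t * ℓ t ^ e ≤ -b := by
      rw [hbdef]; nlinarith
    rw [h1]
    exact (div_le_div_iff_of_pos_right htpos).2 h4
  -- H t := ℓ t + b * log t is antitone on [t₀, ∞)
  set H : ℝ → ℝ := fun t => ℓ t + b * Real.log t with hHdef
  have hHanti : AntitoneOn H (Set.Ici t₀) := by
    have hIci : Set.Ici t₀ ⊆ Set.Ioi (0:ℝ) := fun z hz => lt_of_lt_of_le ht₀.1 hz
    refine antitoneOn_of_deriv_nonpos (convex_Ici t₀) ?_ ?_ ?_
    · exact (hcont.mono hIci).add (continuousOn_const.mul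
        (Real.continuousOn_log.mono (fun z hz => ne_of_gt (hIci hz))))
    · intro z hz
      rw [interior_Ici] at hz
      have hz0 : 0 < z := lt_trans ht₀.1 hz
      exact ((hderiv z (hD z hz0)).add
        ((Real.hasDerivAt_log hz0.ne').const_mul b)).differentiableAt.differentiableWithinAt
    · intro z hz
      rw [interior_Ici] at hz
      have hz0 : 0 < z := lt_trans ht₀.1 hz
      have hd : HasDerivAt H (ℓ' z + b * z⁻¹) z :=
        (hderiv z (hD z hz0)).add ((Real.hasDerivAt_log hz0.ne').const_mul b)
      rw [hd.deriv]
      have := hkey z (le_of_lt hz)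
      rw [neg_div] at this
      have hbz : b * z⁻¹ = b / z := by ring
      linarith [this, hbz ▸ le_refl (b * z⁻¹)]
  -- derive the contradiction at a large time
  set y : ℝ := (ℓ t₀ + b * Real.log t₀ + 1) / b with hydef
  set T : ℝ := max t₀ (Real.exp y) with hTdef
  have hT0 : t₀ ≤ T := le_max_left _ _
  have hTpos : 0 < T := lt_of_lt_of_le ht₀.1 hT0
  have hHle : H T ≤ H t₀ := hHanti (Set.self_mem_Ici) hT0 hT0
  have hlogT : y ≤ Real.log T := by
    rw [← Real.log_exp y]
    exact Real.log_le_log (Real.exp_pos y) (le_max_right _ _)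
  have hlT : x ≤ ℓ T := hcon T (hD T hTpos)
  have hby : b * y = ℓ t₀ + b * Real.log t₀ + 1 := by
    rw [hydef]; field_simp
  have h5 : H T = ℓ T + b * Real.log T := rfl
  have h6 : H t₀ = ℓ t₀ + b * Real.log t₀ := rfl
  have h7 : b * y ≤ b * Real.log T := mul_le_mul_of_nonneg_left hlogT hb.le
  linarith

end Aux4
theorem statement17 (k : ℕ) (hk : 1 ≤ k) (ℓ ℓ' : ℝ → ℝ)
    (hcont : ContinuousOn ℓ (Set.Ioi 0)) (hnonneg : ∀ t ∈ Set.Ioi (0 : ℝ), 0 ≤ ℓ t)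
    (hderiv : ∀ t ∈ openSupp ℓ, HasDerivAt ℓ (ℓ' t) t)
    (hcont' : ContinuousOn ℓ' (openSupp ℓ))
    (hneg : ∀ t ∈ openSupp ℓ, ℓ' t < 0) :
    MemLambda k ℓ ↔
      AntitoneOn (fun t => t * ℓ' t / ℓ t ^ ((1 : ℝ) - 1 / (k : ℝ))) (openSupp ℓ) := by
  have hS := strictAntiOn_openSupp hcont hderiv hneg
  have hkR : (0:ℝ) < (k : ℝ) := by exact_mod_cast Nat.pos_of_ne_zero (by omega)
  set ψ : ℝ → ℝ := fun t => t * ℓ' t / ℓ t ^ ((1 : ℝ) - 1 / (k : ℝ)) with hψdef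
  constructor
  · rintro ⟨-, -, -, -, hconc⟩
    intro t₁ h₁ t₂ h₂ h12
    rcases h12.eq_or_lt with rfl | hlt
    · exact le_refl _
    have hp1 : 0 < ℓ t₁ := pos_of_mem_openSupp hcont hnonneg hderiv hneg h₁
    have hp2 : 0 < ℓ t₂ := pos_of_mem_openSupp hcont hnonneg hderiv hneg h₂
    have hl21 : ℓ t₂ < ℓ t₁ := hS h₁ h₂ hlt
    set s₁ : ℝ := ℓ t₁ ^ ((1:ℝ)/(k:ℝ)) with hs₁def
    set s₂ : ℝ := ℓ t₂ ^ ((1:ℝ)/(k:ℝ)) with hs₂def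
    have hs₁pos : 0 < s₁ := Real.rpow_pos_of_pos hp1 _
    have hs₂pos : 0 < s₂ := Real.rpow_pos_of_pos hp2 _
    have hs21 : s₂ < s₁ := Real.rpow_lt_rpow hp2.le hl21 (by positivity)
    have hcancel : (1/(k:ℝ)) * (k:ℝ) = 1 := by field_simp
    have hsk1 : s₁ ^ k = ℓ t₁ := by
      rw [hs₁def, ← Real.rpow_natCast (ℓ t₁ ^ ((1:ℝ)/(k:ℝ))) k, ← Real.rpow_mul hp1.le,
        hcancel, Real.rpow_one]
    have hsk2 : s₂ ^ k = ℓ t₂ := by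
      rw [hs₂def, ← Real.rpow_natCast (ℓ t₂ ^ ((1:ℝ)/(k:ℝ))) k, ← Real.rpow_mul hp2.le,
        hcancel, Real.rpow_one]
    have hIccD : Set.Icc t₁ t₂ ⊆ openSupp ℓ :=
      fun z hz => openSupp_down h₂ (lt_of_lt_of_le h₁.1 hz.1) hz.2
    have hIVT := intermediate_value_Icc' hlt.le ((hcont.mono fun z hz => hz.1).mono hIccD)
    have hpre : ∀ s ∈ Set.Icc s₂ s₁, ∃ u ∈ openSupp ℓ, ℓ u = s ^ k := by
      intro s hs
      have hs0 : 0 < s := hs₂pos.trans_le hs.1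
      have hA : ℓ t₂ ≤ s ^ k := hsk2 ▸ pow_le_pow_left₀ hs₂pos.le hs.1 k
      have hB : s ^ k ≤ ℓ t₁ := hsk1 ▸ pow_le_pow_left₀ hs0.le hs.2 k
      obtain ⟨u, hu, huv⟩ := hIVT ⟨hA, hB⟩
      exact ⟨u, hIccD hu, huv⟩
    have hsubT : Set.Icc s₂ s₁ ⊆ {s : ℝ | 0 < s ∧ ENNReal.ofReal (s ^ k) < supNorm ℓ} := by
      intro s hs
      have hs0 : 0 < s := hs₂pos.trans_le hs.1
      obtain ⟨u, hu, huv⟩ := hpre s hs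
      exact ⟨hs0, huv ▸ lt_supNorm_of_mem hcont hnonneg hderiv hneg hu⟩
    have hdiff : ∀ s ∈ Set.Icc s₂ s₁,
        DifferentiableAt ℝ (fun s => Real.log (linv ℓ (s ^ k))) s := by
      intro s hs
      obtain ⟨u, hu, huv⟩ := hpre s hs
      exact (hasDerivAt_logF hk hcont hnonneg hderiv hneg
        (hs₂pos.trans_le hs.1) hu huv).differentiableAt
    have hconc' : ConcaveOn ℝ (Set.Icc s₂ s₁) (fun s => Real.log (linv ℓ (s ^ k))) :=
      hconc.subset hsubT (convex_Icc _ _)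
    have hAnti := hconc'.antitoneOn_deriv hdiff
    have hd1 : deriv (fun s => Real.log (linv ℓ (s ^ k))) s₁ = (k : ℝ) / ψ t₁ :=
      (hasDerivAt_logF hk hcont hnonneg hderiv hneg hs₁pos h₁ hsk1.symm).deriv
    have hd2 : deriv (fun s => Real.log (linv ℓ (s ^ k))) s₂ = (k : ℝ) / ψ t₂ :=
      (hasDerivAt_logF hk hcont hnonneg hderiv hneg hs₂pos h₂ hsk2.symm).deriv
    have hcomp := hAnti ⟨le_refl s₂, hs21.le⟩ ⟨hs21.le, le_refl s₁⟩ hs21.le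
    rw [hd1, hd2] at hcomp
    have ha := psi_neg (k := k) hcont hnonneg hderiv hneg h₁
    have hc := psi_neg (k := k) hcont hnonneg hderiv hneg h₂
    have hac : 0 < ψ t₁ * ψ t₂ := mul_pos_of_neg_of_neg ha hc
    have e1 : (k:ℝ)/ψ t₁ * (ψ t₁ * ψ t₂) = k * ψ t₂ := by
      field_simp [show ψ t₁ ≠ 0 from ha.ne]; try ring
    have e2 : (k:ℝ)/ψ t₂ * (ψ t₁ * ψ t₂) = k * ψ t₁ := by
      field_simp [show ψ t₂ ≠ 0 from hc.ne]; try ring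
    have h3 : (k:ℝ) * ψ t₂ ≤ k * ψ t₁ := by
      rw [← e1, ← e2]
      exact mul_le_mul_of_nonneg_right hcomp hac.le
    exact le_of_mul_le_mul_left h3 hkR
  · intro hanti
    refine ⟨hk, hcont, hnonneg, hS, ?_⟩
    have hpre : ∀ s ∈ {s : ℝ | 0 < s ∧ ENNReal.ofReal (s ^ k) < supNorm ℓ},
        ∃ u ∈ openSupp ℓ, ℓ u = s ^ k := by
      intro s hs
      obtain ⟨u, hu, huv⟩ := mem_image_of_antitone hk hcont hnonneg hderiv hneg hanti
        (pow_pos hs.1 k) hs.2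
      exact ⟨u, hu, huv⟩
    refine AntitoneOn.concaveOn_of_deriv T_convex ?_ ?_ ?_
    · intro s hs
      obtain ⟨u, hu, huv⟩ := hpre s hs
      exact ((hasDerivAt_logF hk hcont hnonneg hderiv hneg hs.1 hu
        huv).differentiableAt.continuousAt).continuousWithinAt
    · rw [T_isOpen.interior_eq]
      intro s hs
      obtain ⟨u, hu, huv⟩ := hpre s hs
      exact (hasDerivAt_logF hk hcont hnonneg hderiv hneg hs.1 hu
        huv).differentiableAt.differentiableWithinAt
    · rw [T_isOpen.interior_eq]
      intro s₁ h₁ s₂ h₂ h12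
      obtain ⟨u₁, hu₁, hv₁⟩ := hpre s₁ h₁
      obtain ⟨u₂, hu₂, hv₂⟩ := hpre s₂ h₂
      have hd1 : deriv (fun s => Real.log (linv ℓ (s ^ k))) s₁ = (k : ℝ) / ψ u₁ :=
        (hasDerivAt_logF hk hcont hnonneg hderiv hneg h₁.1 hu₁ hv₁).deriv
      have hd2 : deriv (fun s => Real.log (linv ℓ (s ^ k))) s₂ = (k : ℝ) / ψ u₂ :=
        (hasDerivAt_logF hk hcont hnonneg hderiv hneg h₂.1 hu₂ hv₂).deriv
      rw [hd1, hd2]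
      have hsk : s₁ ^ k ≤ s₂ ^ k := pow_le_pow_left₀ h₁.1.le h12 k
      have hle : ℓ u₁ ≤ ℓ u₂ := by rw [hv₁, hv₂]; exact hsk
      have hu21 : u₂ ≤ u₁ := by
        by_contra h
        push_neg at h
        exact absurd (hS hu₁ hu₂ h) (not_lt.2 hle)
      have hψle : ψ u₁ ≤ ψ u₂ := hanti hu₂ hu₁ hu21
      have ha := psi_neg (k := k) hcont hnonneg hderiv hneg hu₁
      have hc := psi_neg (k := k) hcont hnonneg hderiv hneg hu₂
      have hac : 0 < ψ u₁ * ψ u₂ := mul_pos_of_neg_of_neg ha hc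
      have e1 : (k:ℝ)/ψ u₁ * (ψ u₁ * ψ u₂) = k * ψ u₂ := by
        field_simp [show ψ u₁ ≠ 0 from ha.ne]; try ring
      have e2 : (k:ℝ)/ψ u₂ * (ψ u₁ * ψ u₂) = k * ψ u₁ := by
        field_simp [show ψ u₂ ≠ 0 from hc.ne]; try ring
      have h3 : (k:ℝ) * ψ u₁ ≤ k * ψ u₂ := mul_le_mul_of_nonneg_left hψle hkR.le
      rw [← e1, ← e2] at h3
      exact le_of_mul_le_mul_right h3 hac
end
end
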